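/- Soundness of R-deduction: if σ is a signature with modelable context structure R, E ∪ {φ} an R-theory, and E ⊢_R φ, then every σ-model m of E in any Δ_R-multicategory C satisfies φ, i.e., m_v(t₁) = m_v(t₂) where φ = (t₁ ≈_v t₂). -/

import Mathlib

/-- The element of `Fin (∑ i, k i)` determined by block `p.1` and offset `p.2`. -/
def sigmaToFin {n : ℕ} {k : Fin n → ℕ} (p : (i : Fin n) × Fin (k i)) : Fin (∑ i, k i) :=
  ⟨(∑ j ∈ Finset.univ.filter fun j => j < p.1, k j) + p.2.val, by
    have hsub := Finset.sum_le_sum_of_subset (f := k)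
      (Finset.subset_univ (insert p.1 (Finset.univ.filter fun j => j < p.1)))
    rw [Finset.sum_insert (by simp)] at hsub
    have := p.2.isLt
    omega⟩

/-- Decomposition of an element of `Fin (∑ i, k i)` into a block index and an offset. -/
def finToSigma {n : ℕ} {k : Fin n → ℕ} (p : Fin (∑ i, k i)) : (i : Fin n) × Fin (k i) :=
  (List.ofFn fun i => List.ofFn fun x : Fin (k i) =>
    (⟨i, x⟩ : (i : Fin n) × Fin (k i))).flatten.get (Fin.cast (by simp [Function.comp_def, List.sum_ofFn]) p)

/-- Coproduct of two functions between finite ordinals, acting blockwise. -/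
def coprodMap {m₁ n₁ m₂ n₂ : ℕ} (f : Fin m₁ → Fin n₁) (g : Fin m₂ → Fin n₂) :
    Fin (m₁ + m₂) → Fin (n₁ + n₂) :=
  finSumFinEquiv ∘ Sum.map f g ∘ finSumFinEquiv.symm

/-- The similarity component `θ'_{k₁,…,kₙ}` of `θ : [m] → [n]`. -/
def simComp {m n : ℕ} (θ : Fin m → Fin n) (k : Fin n → ℕ) :
    Fin (∑ i, k (θ i)) → Fin (∑ j, k j) :=
  fun p => sigmaToFin ⟨θ (finToSigma p).1, (finToSigma p).2⟩

/-- Cardinality of the fiber of `f` over `i`. -/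
def fiberCard {m n : ℕ} (f : Fin m → Fin n) (i : Fin n) : ℕ :=
  (Finset.univ.filter fun x => f x = i).card

/-- A structure category: a wide subcategory of `FinOrd` closed under coproducts of
morphisms and under similarity components. -/
structure IsStructCat (Δ : ∀ m n : ℕ, Set (Fin m → Fin n)) : Prop where
  id_mem : ∀ n, id ∈ Δ n n
  comp_mem : ∀ {k m n : ℕ} (f : Fin k → Fin m) (g : Fin m → Fin n),
    f ∈ Δ k m → g ∈ Δ m n → g ∘ f ∈ Δ k n
  coprod_mem : ∀ {m₁ n₁ m₂ n₂ : ℕ} (f : Fin m₁ → Fin n₁) (g : Fin m₂ → Fin n₂),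
    f ∈ Δ m₁ n₁ → g ∈ Δ m₂ n₂ → coprodMap f g ∈ Δ (m₁ + m₂) (n₁ + n₂)
  sim_mem : ∀ {m n : ℕ} (θ : Fin m → Fin n), θ ∈ Δ m n → ∀ k : Fin n → ℕ,
    simComp θ k ∈ Δ (∑ i, k (θ i)) (∑ j, k j)

/-- A structure monoid: a subset of ℕ containing 1 and closed under `I`-indexed sums. -/
def IsStructMonoid (I : Set ℕ) : Prop :=
  1 ∈ I ∧ ∀ k ∈ I, ∀ a : Fin k → ℕ, (∀ i, a i ∈ I) → (∑ i, a i) ∈ I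

/-- `Δ^I` : functions all of whose fibers have cardinality in `I`. -/
def DeltaUp (I : Set ℕ) : ∀ m n : ℕ, Set (Fin m → Fin n) :=
  fun _ _ => {f | ∀ i, fiberCard f i ∈ I}

/-- The unique map `[n] → [1]`. -/
def bang (n : ℕ) : Fin n → Fin 1 := fun _ => 0

/-- `Δ_I` : the smallest structure category containing the maps `[n] → [1]` for `n ∈ I`. -/
def GenDelta (I : Set ℕ) : ∀ m n : ℕ, Set (Fin m → Fin n) := fun m n =>
  {f | ∀ Δ : ∀ m n : ℕ, Set (Fin m → Fin n), IsStructCat Δ →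
    (∀ k ∈ I, bang k ∈ Δ k 1) → f ∈ Δ m n}
/-- A context structure on `V`: a relation between contexts (repetition-free words) and
words, reflexive on contexts, contained in letter-expression, closed under composition of
context assignments, and stable under substitution. -/
structure IsCtxStruct {V : Type} (R : List V → List V → Prop) : Prop where
  dom_nodup : ∀ {c v : List V}, R c v → c.Nodup
  refl : ∀ c : List V, c.Nodup → R c c
  mem : ∀ {c v : List V}, R c v → ∀ x ∈ v, x ∈ c
  compose : ∀ {c : List V} (ps : List (List V × List V)),
    R c (ps.map Prod.fst).flatten → (∀ p ∈ ps, R p.1 p.2) →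
    R c (ps.map Prod.snd).flatten
  subst : ∀ {c v d : List V} (s : V → List V),
    R c v → R d (c.map s).flatten → R d (v.map s).flatten

/-- A context structure is modelable if every context of a concatenation of words refines
into contexts of the individual words. -/
def Modelable {V : Type} (R : List V → List V → Prop) : Prop :=
  ∀ (c : List V) (vs : List (List V)), R c vs.flatten →
    ∃ cs : List (List V), R c cs.flatten ∧ List.Forall₂ R cs vs

/-- The structure category `Δ_R` associated to a context structure `R` (relative to a fixed
injection `e : ℕ → V`): `θ : [m] → [n]` lies in `Δ_R` iff `(c₁⋯cₙ) R (c_{θ(1)}⋯c_{θ(m)})`. -/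
def toCat {V : Type} (e : ℕ → V) (R : List V → List V → Prop) :
    ∀ m n : ℕ, Set (Fin m → Fin n) := fun m n =>
  {θ | R (List.ofFn fun i : Fin n => e i.1) (List.ofFn fun i : Fin m => e (θ i).1)}

/-- The context structure `R_Δ` associated to a structure category `Δ`: `c R_Δ v` iff `c`
is a context and `v = c_{θ(1)}⋯c_{θ(m)}` for some `θ` in `Δ`. -/
def toCtx {V : Type} (Δ : ∀ m n : ℕ, Set (Fin m → Fin n)) :
    List V → List V → Prop := fun c v =>
  c.Nodup ∧ ∃ θ : Fin v.length → Fin c.length,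
    θ ∈ Δ v.length c.length ∧ v = List.ofFn fun i => c.get (θ i)
/-- Terms of a multisorted signature with sorts `S`, function symbols `F` (with domain
`dom` and codomain `cod`), and variables `S × ℕ` (countably many of each sort). -/
inductive Tm (S : Type) (F : Type) (dom : F → List S) (cod : F → S) : S → Type
  | var (s : S) (k : ℕ) : Tm S F dom cod s
  | app (f : F) (args : (i : Fin (dom f).length) → Tm S F dom cod ((dom f).get i)) :
      Tm S F dom cod (cod f)

/-- The left-to-right sequence `τ(t)` of variable occurrences in a term. -/
def varSeq {S F : Type} {dom : F → List S} {cod : F → S} :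
    ∀ {s : S}, Tm S F dom cod s → List (S × ℕ)
  | _, .var s k => [(s, k)]
  | _, .app _ args => (List.ofFn fun i => varSeq (args i)).flatten

/-- Simultaneous (type-preserving) substitution of terms for variables. -/
def rename {S F : Type} {dom : F → List S} {cod : F → S}
    (σ : (x : S × ℕ) → Tm S F dom cod x.1) :
    ∀ {s : S}, Tm S F dom cod s → Tm S F dom cod s
  | _, .var s k => σ (s, k)
  | _, .app f args => .app f fun i => rename σ (args i)
/-- The equational deduction system `⊢_R` generated by an `R`-theory `E`: closed under
axioms, reflexivity (on `R`-contexts), symmetry, transitivity, and simultaneous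
`R`-compatible substitution. -/
inductive Ded {S F : Type} {dom : F → List S} {cod : F → S}
    (R : List (S × ℕ) → List (S × ℕ) → Prop)
    (E : ∀ s : S, List (S × ℕ) → Tm S F dom cod s → Tm S F dom cod s → Prop) :
    ∀ s : S, List (S × ℕ) → Tm S F dom cod s → Tm S F dom cod s → Prop
  | ax {s : S} {v : List (S × ℕ)} {t₁ t₂ : Tm S F dom cod s} :
      E s v t₁ t₂ → Ded R E s v t₁ t₂
  | refl {s : S} {v : List (S × ℕ)} (t : Tm S F dom cod s) :
      R v (varSeq t) → Ded R E s v t t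
  | symm {s : S} {v : List (S × ℕ)} {t₁ t₂ : Tm S F dom cod s} :
      Ded R E s v t₁ t₂ → Ded R E s v t₂ t₁
  | trans {s : S} {v : List (S × ℕ)} {t₁ t₂ t₃ : Tm S F dom cod s} :
      Ded R E s v t₁ t₂ → Ded R E s v t₂ t₃ → Ded R E s v t₁ t₃
  | subst {s : S} {v : List (S × ℕ)} {t₁ t₂ : Tm S F dom cod s}
      (σ₁ σ₂ : (x : S × ℕ) → Tm S F dom cod x.1)
      (w : List (S × ℕ)) (ws : List (List (S × ℕ))) (hlen : ws.length = v.length) :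
      Ded R E s v t₁ t₂ →
      (∀ i : Fin v.length, R (ws.get (Fin.cast hlen.symm i)) (varSeq (σ₁ (v.get i)))) →
      (∀ i : Fin v.length, R (ws.get (Fin.cast hlen.symm i)) (varSeq (σ₂ (v.get i)))) →
      (∀ i : Fin v.length,
        Ded R E (v.get i).1 (ws.get (Fin.cast hlen.symm i)) (σ₁ (v.get i)) (σ₂ (v.get i))) →
      R w ws.flatten →
      Ded R E s w (rename σ₁ t₁) (rename σ₂ t₂)
/-- A multicategory, with multimorphism sources given as `Fin`-indexed families. -/
structure Multicat where
  Obj : Type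
  Hom : (n : ℕ) → (Fin n → Obj) → Obj → Type
  one : (a : Obj) → Hom 1 (fun _ => a) a
  comp : ∀ {n : ℕ} {bs : Fin n → Obj} {c : Obj}, Hom n bs c →
    ∀ {ks : Fin n → ℕ} {as : (i : Fin n) → Fin (ks i) → Obj},
    ((i : Fin n) → Hom (ks i) (as i) (bs i)) →
    Hom (∑ i, ks i) (fun p => as (finToSigma p).1 (finToSigma p).2) c
  comp_one : ∀ {n : ℕ} {bs : Fin n → Obj} {c : Obj} (g : Hom n bs c),
    HEq (comp g fun i => one (bs i)) g
  one_comp : ∀ {n : ℕ} {as : Fin n → Obj} {c : Obj} (f : Hom n as c),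
    HEq (comp (one c) fun _ => f) f
  assoc : ∀ {n : ℕ} {cs : Fin n → Obj} {d : Obj} (h : Hom n cs d)
    {ms : Fin n → ℕ} {bs : (i : Fin n) → Fin (ms i) → Obj}
    (gs : (i : Fin n) → Hom (ms i) (bs i) (cs i))
    {ks : (i : Fin n) → Fin (ms i) → ℕ}
    {as : (i : Fin n) → (j : Fin (ms i)) → Fin (ks i j) → Obj}
    (fs : (i : Fin n) → (j : Fin (ms i)) → Hom (ks i j) (as i j) (bs i j)),
    HEq (comp (comp h gs) (fun p => fs (finToSigma p).1 (finToSigma p).2))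
      (comp h fun i => comp (gs i) (fs i))

/-- n-ary coproduct of a family of maps between finite ordinals. -/
def coprodFam {n : ℕ} {k l : Fin n → ℕ} (σ : (i : Fin n) → Fin (k i) → Fin (l i)) :
    Fin (∑ i, k i) → Fin (∑ i, l i) :=
  fun p => sigmaToFin ⟨(finToSigma p).1, σ (finToSigma p).1 (finToSigma p).2⟩

/-- A `Δ`-action on a multicategory `M`, making `M` a `Δ`-multicategory: an action of the
structure category `Δ` on hom-sets, compatible with identities, composition of `Δ`-maps,
composition on arguments (via coproducts), and composition on the outer morphism (via
similarity components). -/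
structure DeltaAction (Δ : ∀ m n : ℕ, Set (Fin m → Fin n)) (M : Multicat) where
  act : ∀ {m n : ℕ} (θ : Fin m → Fin n), θ ∈ Δ m n →
    ∀ {cs : Fin m → M.Obj} {as : Fin n → M.Obj} {b : M.Obj},
    (∀ i, cs i = as (θ i)) → M.Hom m cs b → M.Hom n as b
  act_id : ∀ {n : ℕ} (h : id ∈ Δ n n) {as : Fin n → M.Obj} {b : M.Obj} (f : M.Hom n as b),
    act id h (fun _ => rfl) f = f
  act_comp : ∀ {k m n : ℕ} (σ : Fin k → Fin m) (τ : Fin m → Fin n)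
    (hσ : σ ∈ Δ k m) (hτ : τ ∈ Δ m n) (hτσ : τ ∘ σ ∈ Δ k n)
    {as : Fin n → M.Obj} {b : M.Obj} (f : M.Hom k (fun i => as (τ (σ i))) b),
    act (τ ∘ σ) hτσ (fun _ => rfl) f
      = act τ hτ (fun _ => rfl) (act σ hσ (fun _ => rfl) f)
  act_arg : ∀ {n : ℕ} {bs : Fin n → M.Obj} {c : M.Obj} (g : M.Hom n bs c)
    {k l : Fin n → ℕ} (σ : (i : Fin n) → Fin (k i) → Fin (l i))
    (hσ : ∀ i, σ i ∈ Δ (k i) (l i))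
    {a : (i : Fin n) → Fin (l i) → M.Obj}
    (f : (i : Fin n) → M.Hom (k i) (fun j => a i (σ i j)) (bs i))
    (hcop : coprodFam σ ∈ Δ (∑ i, k i) (∑ i, l i))
    (hctx : ∀ p : Fin (∑ i, k i),
      a (finToSigma p).1 (σ (finToSigma p).1 (finToSigma p).2) =
        a (finToSigma (coprodFam σ p)).1 (finToSigma (coprodFam σ p)).2),
    M.comp g (fun i => act (σ i) (hσ i) (fun _ => rfl) (f i)) =
      act (coprodFam σ) hcop hctx (M.comp g f)
  act_sim : ∀ {m n : ℕ} (τ : Fin m → Fin n) (hτ : τ ∈ Δ m n)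
    {bs : Fin n → M.Obj} {c : M.Obj} (g : M.Hom m (fun i => bs (τ i)) c)
    {k : Fin n → ℕ} {a : (i : Fin n) → Fin (k i) → M.Obj}
    (f : (i : Fin n) → M.Hom (k i) (a i) (bs i))
    (hsim : simComp τ k ∈ Δ (∑ i, k (τ i)) (∑ j, k j))
    (hctx : ∀ q : Fin (∑ i, k (τ i)),
      a (τ (finToSigma q).1) (finToSigma q).2 =
        a (finToSigma (simComp τ k q)).1 (finToSigma (simComp τ k q)).2),
    M.comp (act τ hτ (fun _ => rfl) g) f =
      act (simComp τ k) hsim hctx (M.comp g fun j => f (τ j))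

/-- Interpretation of terms in a model living in a `Δ`-multicategory: `Interp Δ M A mS mF v
s t g` says that `g` is the multimorphism `m_v(t) : m_v → m(s)` obtained from the recursive
definition of the interpretation of `t` in the `R`-context `v`. -/
inductive Interp (Δ : ∀ m n : ℕ, Set (Fin m → Fin n)) (M : Multicat) (A : DeltaAction Δ M)
    {S F : Type} {dom : F → List S} {cod : F → S} (mS : S → M.Obj)
    (mF : ∀ f : F, M.Hom (dom f).length (fun i => mS ((dom f).get i)) (mS (cod f))) :
    ∀ (v : List (S × ℕ)) (s : S), Tm S F dom cod s →
      M.Hom v.length (fun i => mS ((v.get i).1)) (mS s) → Prop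
  | var (v : List (S × ℕ)) (hv : v.Nodup) (i : Fin v.length)
      (hθ : (fun _ : Fin 1 => i) ∈ Δ 1 v.length) :
      Interp Δ M A mS mF v (v.get i).1 (.var (v.get i).1 (v.get i).2)
        (A.act (fun _ => i) hθ (fun _ => rfl) (M.one (mS ((v.get i).1))))
  | app (v : List (S × ℕ)) (hv : v.Nodup) (f : F)
      (args : (i : Fin (dom f).length) → Tm S F dom cod ((dom f).get i))
      (ws : (i : Fin (dom f).length) → List (S × ℕ)) (hws : ∀ i, (ws i).Nodup)
      (hs : (i : Fin (dom f).length) →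
        M.Hom (ws i).length (fun j => mS (((ws i).get j).1)) (mS ((dom f).get i)))
      (hargs : ∀ i, Interp Δ M A mS mF (ws i) ((dom f).get i) (args i) (hs i))
      (θ : Fin (∑ i, (ws i).length) → Fin v.length)
      (hθ : θ ∈ Δ (∑ i, (ws i).length) v.length)
      (hpos : ∀ q, (ws (finToSigma q).1).get (finToSigma q).2 = v.get (θ q)) :
      Interp Δ M A mS mF v (cod f) (.app f args)
        (A.act θ hθ (fun q => congrArg (fun x => mS x.1) (hpos q)) (M.comp (mF f) hs))


section SndAux

theorem ofFn_get_cast {α : Type*} {m : ℕ} (l : List α) (h : m = l.length) :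
    List.ofFn (fun q : Fin m => l.get (Fin.cast h q)) = l := by
  subst h; simp

theorem length_flatten_ofFn {α : Type*} {n : ℕ} (L : Fin n → List α) :
    (List.ofFn L).flatten.length = ∑ i, (L i).length := by
  simp [List.length_flatten, List.map_ofFn, List.sum_ofFn, Function.comp]

theorem flatten_ofFn_ofFn {α : Type*} {n : ℕ} {k : Fin n → ℕ} (f : (i : Fin n) → Fin (k i) → α) :
    (List.ofFn fun i => List.ofFn fun j => f i j).flatten
      = List.ofFn fun q : Fin (∑ i, k i) => f (finToSigma q).1 (finToSigma q).2 := by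
  have key : ∀ (g : ((i : Fin n) × Fin (k i)) → α),
      (List.ofFn fun i => List.ofFn fun j => g ⟨i, j⟩).flatten
        = List.map g (List.ofFn fun i => List.ofFn fun x : Fin (k i) =>
            (⟨i, x⟩ : (i : Fin n) × Fin (k i))).flatten := by
    intro g
    rw [List.map_flatten, List.map_ofFn]
    congr 1
    congr 1
    funext i
    simp [Function.comp_def, List.map_ofFn]
  rw [key (fun p => f p.1 p.2)]
  have h2 : (List.ofFn fun q : Fin (∑ i, k i) => f (finToSigma q).1 (finToSigma q).2)
      = List.map (fun p : (i : Fin n) × Fin (k i) => f p.1 p.2)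
          (List.ofFn fun q : Fin (∑ i, k i) => finToSigma q) := by
    rw [List.map_ofFn]; rfl
  rw [h2]
  congr 1
  show _ = List.ofFn fun q : Fin (∑ i, k i) =>
    (List.ofFn fun i => List.ofFn fun x : Fin (k i) =>
      (⟨i, x⟩ : (i : Fin n) × Fin (k i))).flatten.get (Fin.cast (by
        simp [Function.comp_def, List.sum_ofFn]) q)
  exact (ofFn_get_cast _ _).symm

theorem sum_filter_lt_zero {n : ℕ} (k : Fin (n+1) → ℕ) :
    ∑ j ∈ Finset.univ.filter (fun j => j < (0 : Fin (n+1))), k j = 0 := by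
  convert Finset.sum_empty
  ext j; simp

theorem sum_filter_lt_succ {n : ℕ} (k : Fin (n+1) → ℕ) (i : Fin n) :
    ∑ j ∈ Finset.univ.filter (fun j => j < i.succ), k j
      = k 0 + ∑ j ∈ Finset.univ.filter (fun j => j < i), k j.succ := by
  rw [Finset.sum_filter, Finset.sum_filter, Fin.sum_univ_succ]
  simp [Fin.succ_lt_succ_iff, Fin.succ_pos]

theorem take_ofFn_sum : ∀ {n : ℕ} (k : Fin n → ℕ) (i : Fin n),
    ((List.ofFn k).take i.val).sum = ∑ j ∈ Finset.univ.filter (fun j => j < i), k j := by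
  intro n
  induction n with
  | zero => exact fun k i => i.elim0
  | succ n ih =>
    intro k i
    cases i using Fin.cases with
    | zero => simp [sum_filter_lt_zero]
    | succ i =>
      rw [List.ofFn_succ]
      simp only [Fin.val_succ, List.take_succ_cons, List.sum_cons,
        ih (fun j => k j.succ) i, sum_filter_lt_succ]

theorem flatten_get_eq {α : Type*} : ∀ (L : List (List α)) (m i : ℕ) (hi : i < L.length) (j : ℕ)
    (hj : j < (L.get ⟨i, hi⟩).length) (hm : m = ((L.take i).map List.length).sum + j)
    (hmlt : m < L.flatten.length),
    L.flatten.get ⟨m, hmlt⟩ = (L.get ⟨i, hi⟩).get ⟨j, hj⟩ := by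
  intro L
  induction L with
  | nil => intro m i hi; simp at hi
  | cons a L ih =>
    intro m i hi j hj hm hmlt
    cases i with
    | zero =>
      simp only [List.take_zero, List.map_nil, List.sum_nil, Nat.zero_add] at hm
      subst hm
      simp only [List.flatten_cons, List.get_eq_getElem]
      exact List.getElem_append_left hj
    | succ i =>
      simp only [List.take_succ_cons, List.map_cons, List.sum_cons] at hm
      simp only [List.flatten_cons, List.get_eq_getElem] at *
      have hge : a.length ≤ m := by omega
      rw [List.getElem_append_right hge]
      have := ih (m - a.length) i (by simpa using hi) j hj (by omega)
        (by simp only [List.flatten_cons, List.length_append] at hmlt; omega)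
      simpa [List.get_eq_getElem] using this

theorem finToSigma_sigmaToFin {n : ℕ} {k : Fin n → ℕ} (p : (i : Fin n) × Fin (k i)) :
    finToSigma (sigmaToFin p) = p := by
  show (List.ofFn fun i => List.ofFn fun x : Fin (k i) =>
      (⟨i, x⟩ : (i : Fin n) × Fin (k i))).flatten.get _ = p
  have hi : p.1.val < (List.ofFn fun i => List.ofFn fun x : Fin (k i) =>
      (⟨i, x⟩ : (i : Fin n) × Fin (k i))).length := by simp
  have hj : p.2.val < ((List.ofFn fun i => List.ofFn fun x : Fin (k i) =>
      (⟨i, x⟩ : (i : Fin n) × Fin (k i))).get ⟨p.1.val, hi⟩).length := by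
    simp [List.get_ofFn]
  have hm : (sigmaToFin p).val =
      (((List.ofFn fun i => List.ofFn fun x : Fin (k i) =>
        (⟨i, x⟩ : (i : Fin n) × Fin (k i))).take p.1.val).map List.length).sum + p.2.val := by
    show (∑ j ∈ Finset.univ.filter fun j => j < p.1, k j) + p.2.val = _
    rw [List.map_take, List.map_ofFn]
    have : (List.length ∘ fun i => List.ofFn fun x : Fin (k i) =>
        (⟨i, x⟩ : (i : Fin n) × Fin (k i))) = k := by
      funext i; simp [Function.comp]
    rw [this, take_ofFn_sum k p.1]
  have hL : (∑ i, k i) = (List.ofFn fun i => List.ofFn fun x : Fin (k i) =>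
      (⟨i, x⟩ : (i : Fin n) × Fin (k i))).flatten.length := by
    simp [Function.comp_def, List.sum_ofFn]
  have key := flatten_get_eq _ (sigmaToFin p).val p.1.val hi p.2.val hj hm
    (lt_of_lt_of_eq (sigmaToFin p).isLt hL)
  have hc : Fin.cast (by simp [Function.comp_def, List.sum_ofFn] :
      (∑ i, k i) = (List.ofFn fun i => List.ofFn fun x : Fin (k i) =>
        (⟨i, x⟩ : (i : Fin n) × Fin (k i))).flatten.length) (sigmaToFin p)
      = ⟨(sigmaToFin p).val, lt_of_lt_of_eq (sigmaToFin p).isLt hL⟩ := rfl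
  rw [hc, key]
  simp [List.get_ofFn]

theorem sigmaList_nodup {n : ℕ} {k : Fin n → ℕ} :
    (List.ofFn fun i => List.ofFn fun x : Fin (k i) =>
      (⟨i, x⟩ : (i : Fin n) × Fin (k i))).flatten.Nodup := by
  rw [List.nodup_flatten]
  constructor
  · intro l hl
    simp only [List.mem_ofFn] at hl
    obtain ⟨i, rfl⟩ := hl
    rw [List.nodup_ofFn]
    intro a b h
    simpa using h
  · rw [List.pairwise_iff_get]
    intro i j hij
    simp only [List.get_ofFn]
    intro x hx hy
    simp only [List.mem_ofFn] at hx hy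
    obtain ⟨a, rfl⟩ := hx
    obtain ⟨b, hb⟩ := hy
    have h1 := congrArg Sigma.fst hb
    simp only at h1
    have h2 : (j : ℕ) = (i : ℕ) := by simpa using congrArg Fin.val h1
    have h3 : (i : ℕ) < (j : ℕ) := hij
    omega

theorem finToSigma_injective {n : ℕ} {k : Fin n → ℕ} :
    Function.Injective (finToSigma (n := n) (k := k)) := by
  intro q q' h
  unfold finToSigma at h
  have := (sigmaList_nodup (n := n) (k := k)).get_inj_iff.mp h
  exact Fin.ext (by simpa using congrArg Fin.val this)

theorem sigmaToFin_finToSigma {n : ℕ} {k : Fin n → ℕ} (q : Fin (∑ i, k i)) :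
    sigmaToFin (finToSigma q) = q :=
  finToSigma_injective (finToSigma_sigmaToFin _)

theorem flatten_ofFn_eq {α : Type*} {n : ℕ} (L : Fin n → List α) :
    (List.ofFn L).flatten = List.ofFn
      (fun q : Fin (∑ i, (L i).length) => (L (finToSigma q).1).get (finToSigma q).2) := by
  have := flatten_ofFn_ofFn (fun i (j : Fin (L i).length) => (L i).get j)
  simpa [List.ofFn_get] using this

noncomputable def posIn {α : Type*} (w : List α) (x : α) (hx : x ∈ w) : Fin w.length :=
  (List.mem_iff_get.mp hx).choose

theorem get_posIn {α : Type*} (w : List α) (x : α) (hx : x ∈ w) :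
    w.get (posIn w x hx) = x :=
  (List.mem_iff_get.mp hx).choose_spec

theorem posIn_unique {α : Type*} {w : List α} (hw : w.Nodup) {x : α} {hx : x ∈ w}
    (i : Fin w.length) (h : w.get i = x) : i = posIn w x hx :=
  hw.get_inj_iff.mp (h.trans (get_posIn w x hx).symm)


section SecB

variable {V : Type} (e : ℕ → V) (he : Function.Injective e)
variable {R : List V → List V → Prop} (hR : IsCtxStruct R)

/-- Generic context of length `n`. -/
def genCtx (n : ℕ) : List V := List.ofFn fun i : Fin n => e i.1

/-- Substitution function sending `e i` to `f i` (for `i < n`) and fixing other letters. -/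
noncomputable def genSub (n : ℕ) (f : Fin n → List V) : V → List V := fun x =>
  letI := Classical.dec (∃ i : Fin n, e i.val = x)
  if h : ∃ i : Fin n, e i.val = x then f h.choose else [x]

/-- Substitution function sending the `i`-th letter of `c` to `f i`, fixing other letters. -/
noncomputable def ctxSub (c : List V) (f : Fin c.length → List V) : V → List V := fun x =>
  letI := Classical.dec (x ∈ c)
  if h : x ∈ c then f (posIn c x h) else [x]

include he

theorem genCtx_nodup (n : ℕ) : (genCtx e n).Nodup :=
  List.nodup_ofFn.mpr (fun a b h => Fin.ext (he h))

theorem genSub_apply {n : ℕ} (f : Fin n → List V) (i : Fin n) :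
    genSub e n f (e i.val) = f i := by
  unfold genSub
  rw [dif_pos ⟨i, rfl⟩]
  congr 1
  exact Fin.ext (he (⟨i, rfl⟩ : ∃ j : Fin n, e j.val = e i.val).choose_spec)

omit he

theorem ctxSub_apply {c : List V} (hc : c.Nodup) (f : Fin c.length → List V)
    (i : Fin c.length) : ctxSub c f (c.get i) = f i := by
  unfold ctxSub
  have hmem : c.get i ∈ c := List.mem_iff_get.mpr ⟨i, rfl⟩
  rw [dif_pos hmem, ← posIn_unique hc i rfl]

theorem flatten_ofFn_singleton {α : Type*} : ∀ {n : ℕ} (h : Fin n → α),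
    (List.ofFn fun i => [h i]).flatten = List.ofFn h := by
  intro n
  induction n with
  | zero => intro h; simp
  | succ n ih => intro h; simp [List.ofFn_succ, ih]

include he

theorem map_genSub_flatten {n m : ℕ} (f : Fin n → List V) (g : Fin m → Fin n) :
    ((List.ofFn fun q => e (g q).val).map (genSub e n f)).flatten
      = (List.ofFn fun q => f (g q)).flatten := by
  rw [List.map_ofFn]
  congr 1
  congr 1
  funext q
  exact genSub_apply e he f (g q)

theorem genCtx_map_genSub {n : ℕ} (f : Fin n → List V) :
    ((List.ofFn fun i : Fin n => e i.1).map (genSub e n f)).flatten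
      = (List.ofFn f).flatten := by
  have := map_genSub_flatten e he f (id : Fin n → Fin n)
  simpa using this

omit he

theorem map_ctxSub_flatten {c : List V} (hc : c.Nodup) (f : Fin c.length → List V)
    {m : ℕ} (g : Fin m → Fin c.length) :
    ((List.ofFn fun q => c.get (g q)).map (ctxSub c f)).flatten
      = (List.ofFn fun q => f (g q)).flatten := by
  rw [List.map_ofFn]
  congr 1
  congr 1
  funext q
  exact ctxSub_apply hc f (g q)

theorem ctx_map_ctxSub {c : List V} (hc : c.Nodup) (f : Fin c.length → List V) :
    (c.map (ctxSub c f)).flatten = (List.ofFn f).flatten := by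
  have key : ∀ s : V → List V, (∀ i : Fin c.length, s (c.get i) = f i) →
      (c.map s).flatten = (List.ofFn f).flatten := by
    intro s hs
    conv_lhs => rw [← List.ofFn_get c]
    rw [List.map_ofFn]
    congr 1
    congr 1
    funext i
    exact hs i
  exact key _ (ctxSub_apply hc f)

include he hR

theorem toCat_mem_iff {c : List V} (hc : c.Nodup) {m : ℕ} (θ : Fin m → Fin c.length) :
    θ ∈ toCat e R m c.length ↔ R c (List.ofFn fun q => c.get (θ q)) := by
  constructor
  · intro h
    have hs := hR.subst (genSub e c.length (fun i => [c.get i])) h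
      (d := c) (by
        rw [genCtx_map_genSub e he, flatten_ofFn_singleton, List.ofFn_get]
        exact hR.refl c hc)
    rwa [map_genSub_flatten e he, flatten_ofFn_singleton] at hs
  · intro h
    have hs := hR.subst (ctxSub c (fun i => [e i.val])) h
      (d := genCtx e c.length) (by
        rw [ctx_map_ctxSub hc, flatten_ofFn_singleton]
        exact hR.refl _ (genCtx_nodup e he c.length))
    rwa [map_ctxSub_flatten hc _ θ, flatten_ofFn_singleton] at hs

theorem toCat_comp {k m n : ℕ} {σ : Fin k → Fin m} {θ : Fin m → Fin n}
    (hσ : σ ∈ toCat e R k m) (hθ : θ ∈ toCat e R m n) :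
    (fun q => θ (σ q)) ∈ toCat e R k n := by
  have hs := hR.subst (genSub e m (fun j => [e (θ j).val])) hσ
    (d := genCtx e n) (by
      rw [genCtx_map_genSub e he, flatten_ofFn_singleton]
      exact hθ)
  rwa [map_genSub_flatten e he, flatten_ofFn_singleton] at hs

omit he hR

theorem toCat_cast {m m' n : ℕ} (h : m = m') {θ : Fin m' → Fin n}
    (hθ : θ ∈ toCat e R m' n) : (fun q => θ (Fin.cast h q)) ∈ toCat e R m n := by
  subst h
  exact hθ

include he

theorem blockCtx_nodup {n : ℕ} (l : Fin n → ℕ) (i : Fin n) :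
    (List.ofFn fun j : Fin (l i) => e (sigmaToFin (k := l) ⟨i, j⟩).val).Nodup := by
  rw [List.nodup_ofFn]
  intro a b h
  have h1 : sigmaToFin (k := l) ⟨i, a⟩ = sigmaToFin (k := l) ⟨i, b⟩ := Fin.ext (he h)
  have h2 := congrArg finToSigma h1
  rw [finToSigma_sigmaToFin, finToSigma_sigmaToFin] at h2
  exact eq_of_heq (Sigma.mk.inj_iff.mp h2).2

omit he

theorem blockCtx_flatten {n : ℕ} (l : Fin n → ℕ) :
    (List.ofFn fun i => List.ofFn fun j : Fin (l i) =>
      e (sigmaToFin (k := l) ⟨i, j⟩).val).flatten = genCtx e (∑ i, l i) := by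
  rw [flatten_ofFn_ofFn (fun i (j : Fin (l i)) => e (sigmaToFin (k := l) ⟨i, j⟩).val)]
  unfold genCtx
  congr 1
  funext q
  congr 1
  rw [show (⟨(finToSigma q).1, (finToSigma q).2⟩ : (i : Fin n) × Fin (l i)) = finToSigma q
    from rfl, sigmaToFin_finToSigma]

include he hR

theorem block_rel {n : ℕ} {l : Fin n → ℕ} (i' : Fin n) {m : ℕ} {τ : Fin m → Fin (l i')}
    (hτ : τ ∈ toCat e R m (l i')) :
    R (List.ofFn fun j : Fin (l i') => e (sigmaToFin (k := l) ⟨i', j⟩).val)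
      (List.ofFn fun q : Fin m => e (sigmaToFin (k := l) ⟨i', τ q⟩).val) := by
  have hs := hR.subst (genSub e (l i') (fun j => [e (sigmaToFin (k := l) ⟨i', j⟩).val])) hτ
    (d := List.ofFn fun j : Fin (l i') => e (sigmaToFin (k := l) ⟨i', j⟩).val) (by
      rw [genCtx_map_genSub e he, flatten_ofFn_singleton]
      exact hR.refl _ (blockCtx_nodup e he l i'))
  rwa [map_genSub_flatten e he, flatten_ofFn_singleton] at hs

theorem toCat_coprodFam {n : ℕ} {k l : Fin n → ℕ} (σ : (i : Fin n) → Fin (k i) → Fin (l i))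
    (hσ : ∀ i, σ i ∈ toCat e R (k i) (l i)) :
    coprodFam σ ∈ toCat e R (∑ i, k i) (∑ i, l i) := by
  have hcomp := hR.compose (c := genCtx e (∑ i, l i))
    (List.ofFn fun i =>
      ((List.ofFn fun j : Fin (l i) => e (sigmaToFin (k := l) ⟨i, j⟩).val),
       (List.ofFn fun x : Fin (k i) => e (sigmaToFin (k := l) ⟨i, σ i x⟩).val)))
    (by
      rw [List.map_ofFn]
      simp only [Function.comp_def]
      rw [blockCtx_flatten e]
      exact hR.refl _ (genCtx_nodup e he _))
    (by
      intro p hp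
      simp only [List.mem_ofFn] at hp
      obtain ⟨i, rfl⟩ := hp
      exact block_rel e he hR i (hσ i))
  rw [List.map_ofFn] at hcomp
  simp only [Function.comp_def] at hcomp
  rw [flatten_ofFn_ofFn (fun i (x : Fin (k i)) => e (sigmaToFin (k := l) ⟨i, σ i x⟩).val)]
    at hcomp
  exact hcomp

theorem toCat_simComp {m n : ℕ} {τ : Fin m → Fin n} (hτ : τ ∈ toCat e R m n)
    (k : Fin n → ℕ) : simComp τ k ∈ toCat e R (∑ i, k (τ i)) (∑ j, k j) := by
  have hs := hR.subst
    (genSub e n (fun j => List.ofFn fun x : Fin (k j) => e (sigmaToFin (k := k) ⟨j, x⟩).val))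
    hτ (d := genCtx e (∑ j, k j)) (by
      rw [genCtx_map_genSub e he, blockCtx_flatten e]
      exact hR.refl _ (genCtx_nodup e he _))
  rw [map_genSub_flatten e he] at hs
  rw [flatten_ofFn_ofFn (fun (i : Fin m) (x : Fin (k (τ i))) =>
    e (sigmaToFin (k := k) ⟨τ i, x⟩).val)] at hs
  exact hs

end SecB


section SecC

theorem List.get_of_eq' {α : Type*} {l l' : List α} (h : l = l') (i : Fin l.length) :
    l.get i = l'.get (Fin.cast (by rw [h]) i) := by subst h; rfl

theorem get_flatten_ofFn {α : Type*} {n : ℕ} (L : Fin n → List α)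
    (q : Fin (∑ i, (L i).length)) (hq : q.val < (List.ofFn L).flatten.length) :
    (List.ofFn L).flatten.get ⟨q.val, hq⟩ = (L (finToSigma q).1).get (finToSigma q).2 := by
  rw [List.get_of_eq' (flatten_ofFn_eq L) ⟨q.val, hq⟩, List.get_ofFn]
  suffices h : ∀ q' : Fin (∑ i, (L i).length), q' = q →
      (L (finToSigma q').1).get (finToSigma q').2 = (L (finToSigma q).1).get (finToSigma q).2 by
    exact h _ (Fin.ext rfl)
  intro q' hq'
  subst hq'
  rfl

/-- Cast of a multimorphism along an equality of arities and source families. -/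
def castHom (M : Multicat) {n n' : ℕ} (h : n = n') {as : Fin n → M.Obj} {as' : Fin n' → M.Obj}
    (ha : ∀ i, as i = as' (Fin.cast h i)) {b : M.Obj} (f : M.Hom n as b) : M.Hom n' as' b := by
  subst h
  exact (funext ha : as = as') ▸ f

theorem castHom_heq (M : Multicat) {n n' : ℕ} (h : n = n') {as : Fin n → M.Obj}
    {as' : Fin n' → M.Obj} (ha : ∀ i, as i = as' (Fin.cast h i)) {b : M.Obj}
    (f : M.Hom n as b) : HEq (castHom M h ha f) f := by
  subst h
  have h2 : as = as' := funext ha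
  subst h2
  exact HEq.rfl

theorem act_congr {Δ : ∀ m n : ℕ, Set (Fin m → Fin n)} {M : Multicat} (A : DeltaAction Δ M)
    {m m' n : ℕ} (hm : m = m') {θ : Fin m → Fin n} {θ' : Fin m' → Fin n}
    (hθθ' : ∀ q, θ q = θ' (Fin.cast hm q))
    {cs : Fin m → M.Obj} {cs' : Fin m' → M.Obj} (hcs : ∀ q, cs q = cs' (Fin.cast hm q))
    {as : Fin n → M.Obj} {b : M.Obj}
    {h1 : θ ∈ Δ m n} {h2 : θ' ∈ Δ m' n}
    {hc1 : ∀ i, cs i = as (θ i)} {hc2 : ∀ i, cs' i = as (θ' i)}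
    {f : M.Hom m cs b} {f' : M.Hom m' cs' b} (hf : HEq f f') :
    A.act θ h1 hc1 f = A.act θ' h2 hc2 f' := by
  subst hm
  have h3 : θ = θ' := funext hθθ'
  subst h3
  have h4 : cs = cs' := funext hcs
  subst h4
  have h5 : f = f' := eq_of_heq hf
  subst h5
  rfl

theorem comp_congr (M : Multicat) {n n' : ℕ} (hn : n = n')
    {bs : Fin n → M.Obj} {bs' : Fin n' → M.Obj} (hbs : ∀ i, bs i = bs' (Fin.cast hn i))
    {c : M.Obj} {g : M.Hom n bs c} {g' : M.Hom n' bs' c} (hg : HEq g g')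
    {ks : Fin n → ℕ} {ks' : Fin n' → ℕ} (hks : ∀ i, ks i = ks' (Fin.cast hn i))
    {as : (i : Fin n) → Fin (ks i) → M.Obj} {as' : (i : Fin n') → Fin (ks' i) → M.Obj}
    (has : ∀ i (j : Fin (ks i)), as i j = as' (Fin.cast hn i) (Fin.cast (hks i) j))
    {fs : (i : Fin n) → M.Hom (ks i) (as i) (bs i)}
    {fs' : (i : Fin n') → M.Hom (ks' i) (as' i) (bs' i)}
    (hfs : ∀ i, HEq (fs i) (fs' (Fin.cast hn i))) :
    HEq (M.comp g fs) (M.comp g' fs') := by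
  subst hn
  have h1 : bs = bs' := funext hbs
  subst h1
  have h2 : g = g' := eq_of_heq hg
  subst h2
  have h3 : ks = ks' := funext hks
  subst h3
  have h4 : as = as' := funext fun i => funext fun j => has i j
  subst h4
  have h5 : fs = fs' := funext fun i => eq_of_heq (hfs i)
  subst h5
  exact HEq.rfl

end SecC

section SecD

variable {S F : Type} {dom : F → List S} {cod : F → S} {M : Multicat}

/-- The canonical interpretation of a term over the word of its variable occurrences. -/
def canonHom (mS : S → M.Obj)
    (mF : ∀ f : F, M.Hom (dom f).length (fun i => mS ((dom f).get i)) (mS (cod f))) :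
    ∀ {s : S} (t : Tm S F dom cod s),
      M.Hom (varSeq t).length (fun i => mS ((varSeq t).get i).1) (mS s)
  | _, .var s k => castHom M rfl (fun i => by
      have h : ((varSeq (Tm.var (S := S) (F := F) (dom := dom) (cod := cod) s k)).get
          (Fin.cast rfl i)) = (s, k) := by
        have h0 : (Fin.cast rfl i : Fin 1) = ⟨0, Nat.zero_lt_one⟩ := Subsingleton.elim _ _
        simp [varSeq]
      rw [h]) (M.one (mS s))
  | _, .app f args => castHom M
      ((length_flatten_ofFn fun i => varSeq (args i)).symm :
        (∑ i, (varSeq (args i)).length) = (varSeq (Tm.app f args)).length)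
      (fun p => congrArg (fun x : S × ℕ => mS x.1)
        (get_flatten_ofFn (fun i => varSeq (args i)) p _).symm)
      (M.comp (mF f) (fun i => canonHom mS mF (args i)))

end SecD


section SecE

theorem ofFn_one' {α : Type*} (f : Fin 1 → α) : List.ofFn f = [f 0] := by
  simp [List.ofFn_succ]

theorem act_hcongr {Δ : ∀ m n : ℕ, Set (Fin m → Fin n)} {M : Multicat} (A : DeltaAction Δ M)
    {m m' n : ℕ} (hm : m = m') {θ : Fin m → Fin n} {θ' : Fin m' → Fin n}
    (hθθ' : ∀ q, θ q = θ' (Fin.cast hm q))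
    {cs : Fin m → M.Obj} {cs' : Fin m' → M.Obj} (hcs : ∀ q, cs q = cs' (Fin.cast hm q))
    {as as' : Fin n → M.Obj} (has : ∀ j, as j = as' j) {b : M.Obj}
    {h1 : θ ∈ Δ m n} {h2 : θ' ∈ Δ m' n}
    {hc1 : ∀ i, cs i = as (θ i)} {hc2 : ∀ i, cs' i = as' (θ' i)}
    {f : M.Hom m cs b} {f' : M.Hom m' cs' b} (hf : HEq f f') :
    HEq (A.act θ h1 hc1 f) (A.act θ' h2 hc2 f') := by
  have h0 : as = as' := funext has
  subst h0
  exact heq_of_eq (act_congr A hm hθθ' hcs hf)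

variable {S F : Type} {dom : F → List S} {cod : F → S}
variable (e : ℕ → S × ℕ) (he : Function.Injective e)
variable {R : List (S × ℕ) → List (S × ℕ) → Prop} (hR : IsCtxStruct R)
variable {M : Multicat} (A : DeltaAction (toCat e R) M) (mS : S → M.Obj)
variable (mF : ∀ f : F, M.Hom (dom f).length (fun i => mS ((dom f).get i)) (mS (cod f)))

include he hR

theorem canonical_form {v : List (S × ℕ)} {s : S} {t : Tm S F dom cod s}
    {g : M.Hom v.length (fun i => mS ((v.get i).1)) (mS s)}
    (hI : Interp (toCat e R) M A mS mF v s t g) :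
    R v (varSeq t) ∧
    ∃ (θ : Fin (varSeq t).length → Fin v.length)
      (hθ : θ ∈ toCat e R (varSeq t).length v.length)
      (hpos : ∀ q, (varSeq t).get q = v.get (θ q)),
      g = A.act θ hθ (fun q => congrArg (fun x : S × ℕ => mS x.1) (hpos q))
        (canonHom mS mF t) := by
  induction hI with
  | var v hv i hθi =>
    have hpos1 : ∀ q : Fin (varSeq (Tm.var (S := S) (F := F) (dom := dom) (cod := cod)
        (v.get i).1 (v.get i).2)).length,
        (varSeq (Tm.var (v.get i).1 (v.get i).2)).get q = v.get i := by
      intro q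
      have h0 : q = ⟨0, Nat.zero_lt_one⟩ := Subsingleton.elim (α := Fin 1) q _
      rw [h0]
      rfl
    constructor
    · have h1 := (toCat_mem_iff e he hR hv (fun _ : Fin 1 => i)).mp hθi
      rw [ofFn_one'] at h1
      exact h1
    · refine ⟨fun _ => i, hθi, hpos1, ?_⟩
      exact act_congr A rfl (fun _ => rfl)
        (fun q => (congrArg (fun x : S × ℕ => mS x.1) (hpos1 (Fin.cast rfl q))).symm)
        ((castHom_heq M rfl _ _).symm)
  | app v hv f args ws hws hs hargs θ hθ hpos ih =>
    have hR1 : ∀ i, R (ws i) (varSeq (args i)) := fun i => (ih i).1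
    choose σ hσ hposσ hseq using fun i => (ih i).2
    -- the R-statement
    have hflat : (List.ofFn fun q : Fin (∑ i, (ws i).length) => v.get (θ q))
        = (List.ofFn fun i => ws i).flatten := by
      rw [flatten_ofFn_eq]
      congr 1
      funext q
      exact (hpos q).symm
    have hRv : R v (List.ofFn fun i => ws i).flatten := by
      have h1 := (toCat_mem_iff e he hR hv θ).mp hθ
      rwa [hflat] at h1
    have hRapp : R v (varSeq (Tm.app f args)) := by
      have hcomp := hR.compose (c := v) (List.ofFn fun i => (ws i, varSeq (args i)))
        (by
          rw [List.map_ofFn]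
          simpa [Function.comp_def] using hRv)
        (by
          intro p hp
          simp only [List.mem_ofFn] at hp
          obtain ⟨i, rfl⟩ := hp
          exact hR1 i)
      rw [List.map_ofFn] at hcomp
      simp only [Function.comp_def] at hcomp
      exact hcomp
    have hlen : (varSeq (Tm.app f args)).length = ∑ i, (varSeq (args i)).length :=
      length_flatten_ofFn _
    have hcop : coprodFam σ ∈ toCat e R (∑ i, (varSeq (args i)).length) (∑ i, (ws i).length) :=
      toCat_coprodFam e he hR σ hσ
    have hτσ : (fun q => θ (coprodFam σ q)) ∈
        toCat e R (∑ i, (varSeq (args i)).length) v.length :=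
      toCat_comp e he hR hcop hθ
    have hΘmem : (fun q => θ (coprodFam σ (Fin.cast hlen q))) ∈
        toCat e R (varSeq (Tm.app f args)).length v.length :=
      toCat_cast e hlen hτσ
    -- the position property
    have hW : ∀ p : Fin (∑ i, (varSeq (args i)).length),
        (ws (finToSigma (coprodFam σ p)).1).get (finToSigma (coprodFam σ p)).2
          = (ws (finToSigma p).1).get (σ (finToSigma p).1 (finToSigma p).2) :=
      fun p => congrArg
        (fun p : (i : Fin (dom f).length) × Fin ((ws i).length) => (ws p.1).get p.2)
        (finToSigma_sigmaToFin _)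
    have hposΘ : ∀ q, (varSeq (Tm.app f args)).get q
        = v.get (θ (coprodFam σ (Fin.cast hlen q))) := by
      intro q
      have h1 : (varSeq (Tm.app f args)).get q
          = (varSeq (args (finToSigma (Fin.cast hlen q)).1)).get
              (finToSigma (Fin.cast hlen q)).2 :=
        get_flatten_ofFn (fun i => varSeq (args i)) (Fin.cast hlen q) q.isLt
      exact h1.trans ((hposσ _ _).trans ((hW (Fin.cast hlen q)).symm.trans
        (hpos (coprodFam σ (Fin.cast hlen q)))))
    refine ⟨hRapp, fun q => θ (coprodFam σ (Fin.cast hlen q)), hΘmem, hposΘ, ?_⟩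
    -- the act equality
    let cH : (i : Fin (dom f).length) → M.Hom (varSeq (args i)).length
        (fun j => mS (((ws i).get (σ i j)).1)) (mS ((dom f).get i)) :=
      fun i => castHom M rfl
        (fun j => congrArg (fun x : S × ℕ => mS x.1) (hposσ i j))
        (canonHom mS mF (args i))
    have hs_eq : hs = fun i => A.act (σ i) (hσ i) (fun _ => rfl) (cH i) := by
      funext i
      rw [hseq i]
      exact act_congr A rfl (fun _ => rfl)
        (fun q => congrArg (fun x : S × ℕ => mS x.1) (hposσ i q))
        ((castHom_heq M rfl _ _).symm)
    let f0 : M.Hom (∑ i, (varSeq (args i)).length)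
        (fun p => mS ((v.get (θ (coprodFam σ p))).1)) (mS (cod f)) :=
      castHom M rfl
        (fun p => congrArg (fun x : S × ℕ => mS x.1)
          ((hW p).symm.trans (hpos (coprodFam σ p))))
        (M.comp (mF f) cH)
    have step2 := A.act_arg (mF f) σ hσ (a := fun i j => mS (((ws i).get j).1)) cH hcop
      (fun p => congrArg (fun x : S × ℕ => mS x.1) (hW p).symm)
    have step3 := A.act_comp (coprodFam σ) θ hcop hθ hτσ
      (as := fun j => mS ((v.get j).1)) f0
    calc A.act θ hθ (fun q => congrArg (fun x : S × ℕ => mS x.1) (hpos q))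
          (M.comp (mF f) hs)
        = A.act θ hθ (fun _ => rfl)
            (A.act (coprodFam σ) hcop (as := fun p => mS ((v.get (θ p)).1)) (fun _ => rfl)
              f0) := by
          rw [hs_eq, step2]
          exact act_congr A rfl (fun _ => rfl)
            (fun p => congrArg (fun x : S × ℕ => mS x.1) (hpos p))
            (act_hcongr A rfl (fun _ => rfl)
              (fun p => congrArg (fun x : S × ℕ => mS x.1)
                ((hW p).symm.trans (hpos (coprodFam σ p))))
              (fun p => congrArg (fun x : S × ℕ => mS x.1) (hpos p))
              ((castHom_heq M rfl _ _).symm))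
      _ = A.act (fun q => θ (coprodFam σ q)) hτσ (fun _ => rfl) f0 := step3.symm
      _ = A.act (fun q => θ (coprodFam σ (Fin.cast hlen q))) hΘmem
            (fun q => congrArg (fun x : S × ℕ => mS x.1) (hposΘ q))
            (canonHom mS mF (Tm.app f args)) := by
          refine act_congr A hlen.symm ?_ ?_ ?_
          · exact fun q => rfl
          · exact fun q => (congrArg (fun x : S × ℕ => mS x.1)
              (hposΘ (Fin.cast hlen.symm q))).symm
          -- HEq f0 (canonHom mS mF (Tm.app f args))
          refine HEq.trans (castHom_heq M rfl _ _) (HEq.trans ?_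
            (castHom_heq M _ _ (M.comp (mF f) (fun i => canonHom mS mF (args i)))).symm)
          exact comp_congr M rfl (fun _ => rfl) HEq.rfl (fun _ => rfl)
            (fun i j => (congrArg (fun x : S × ℕ => mS x.1) (hposσ i j)).symm)
            (fun i => castHom_heq M rfl _ _)
end SecE


section SecF

theorem map_eq_ofFn {α β : Type*} (l : List α) (g : α → β) :
    l.map g = List.ofFn (fun q : Fin l.length => g (l.get q)) := by
  have key : ∀ s : α → β, l.map s = List.ofFn (fun q : Fin l.length => s (l.get q)) := by
    intro s
    conv_lhs => rw [← List.ofFn_get l]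
    rw [List.map_ofFn]
    rfl
  exact key g

theorem fts_congr {n : ℕ} {k k' : Fin n → ℕ} (h : k = k')
    (q : Fin (∑ i, k i)) :
    finToSigma (k := k') (Fin.cast (by rw [h]) q)
      = ⟨(finToSigma (k := k) q).1,
          Fin.cast (congrFun h _) (finToSigma (k := k) q).2⟩ := by
  subst h
  rfl

variable {S F : Type} {dom : F → List S} {cod : F → S}
variable (e : ℕ → S × ℕ) (he : Function.Injective e)
variable {R : List (S × ℕ) → List (S × ℕ) → Prop} (hR : IsCtxStruct R)
  (hMod : Modelable R)
variable {M : Multicat} (A : DeltaAction (toCat e R) M) (mS : S → M.Obj)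
variable (mF : ∀ f : F, M.Hom (dom f).length (fun i => mS ((dom f).get i)) (mS (cod f)))

theorem interp_nodup {v : List (S × ℕ)} {s : S} {t : Tm S F dom cod s}
    {g : M.Hom v.length (fun i => mS ((v.get i).1)) (mS s)}
    (hI : Interp (toCat e R) M A mS mF v s t g) : v.Nodup := by
  cases hI with
  | var v hv i hθ => exact hv
  | app v hv f args ws hws hs hargs θ hθ hpos => exact hv

include he hR

theorem interp_unique {v : List (S × ℕ)} {s : S} {t : Tm S F dom cod s}
    {g₁ g₂ : M.Hom v.length (fun i => mS ((v.get i).1)) (mS s)}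
    (h₁ : Interp (toCat e R) M A mS mF v s t g₁)
    (h₂ : Interp (toCat e R) M A mS mF v s t g₂) : g₁ = g₂ := by
  have hv := interp_nodup e A mS mF h₁
  obtain ⟨-, θ₁, hθ₁, hpos₁, heq₁⟩ := canonical_form e he hR A mS mF h₁
  obtain ⟨-, θ₂, hθ₂, hpos₂, heq₂⟩ := canonical_form e he hR A mS mF h₂
  have hθeq : θ₁ = θ₂ := by
    funext q
    exact hv.get_inj_iff.mp ((hpos₁ q).symm.trans (hpos₂ q))
  subst hθeq
  rw [heq₁, heq₂]

omit he hR

theorem varSeq_rename {σ : (x : S × ℕ) → Tm S F dom cod x.1} :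
    ∀ {s : S} (t : Tm S F dom cod s),
    varSeq (rename σ t) = ((varSeq t).map fun x => varSeq (σ x)).flatten := by
  intro s t
  induction t with
  | var s k => simp [varSeq, rename]
  | app f args ih =>
    show (List.ofFn fun i => varSeq (rename σ (args i))).flatten = _
    have h1 : varSeq (Tm.app f args) = (List.ofFn fun i => varSeq (args i)).flatten := rfl
    rw [h1, List.map_flatten, List.flatten_flatten, List.map_map, List.map_ofFn]
    congr 1
    congr 1
    funext i
    exact ih i

theorem rename_len (σ : (x : S × ℕ) → Tm S F dom cod x.1) {s : S} (t : Tm S F dom cod s) :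
    (varSeq (rename σ t)).length
      = ∑ q : Fin (varSeq t).length, (varSeq (σ ((varSeq t).get q))).length := by
  rw [varSeq_rename, map_eq_ofFn]
  exact length_flatten_ofFn _

theorem varSeq_rename' (σ : (x : S × ℕ) → Tm S F dom cod x.1) {s : S}
    (t : Tm S F dom cod s) :
    varSeq (rename σ t)
      = (List.ofFn fun q : Fin (varSeq t).length => varSeq (σ ((varSeq t).get q))).flatten := by
  rw [varSeq_rename, map_eq_ofFn]

theorem rename_get (σ : (x : S × ℕ) → Tm S F dom cod x.1) {s : S} (t : Tm S F dom cod s)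
    (p : Fin (∑ q : Fin (varSeq t).length, (varSeq (σ ((varSeq t).get q))).length))
    (hp : p.val < (varSeq (rename σ t)).length) :
    (varSeq (rename σ t)).get ⟨p.val, hp⟩
      = (varSeq (σ ((varSeq t).get (finToSigma p).1))).get (finToSigma p).2 := by
  rw [List.get_of_eq' (varSeq_rename' σ t) ⟨p.val, hp⟩]
  exact get_flatten_ofFn _ p _

include hR in
theorem ded_R {E : ∀ s : S, List (S × ℕ) → Tm S F dom cod s → Tm S F dom cod s → Prop}
    (hE : ∀ s v t₁ t₂, E s v t₁ t₂ → R v (varSeq t₁) ∧ R v (varSeq t₂))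
    {s : S} {v : List (S × ℕ)} {t₁ t₂ : Tm S F dom cod s}
    (hd : Ded R E s v t₁ t₂) : R v (varSeq t₁) ∧ R v (varSeq t₂) := by
  induction hd with
  | ax h => exact hE _ _ _ _ h
  | refl t h => exact ⟨h, h⟩
  | symm h ih => exact ⟨ih.2, ih.1⟩
  | trans h1 h2 ih1 ih2 => exact ⟨ih1.1, ih2.2⟩
  | @subst s v t₁ t₂ σ₁ σ₂ w ws hlen hd h1 h2 hall hw ih ihall =>
    have step : ∀ (σ : (x : S × ℕ) → Tm S F dom cod x.1)
        (hσ : ∀ i : Fin v.length,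
          R (ws.get (Fin.cast hlen.symm i)) (varSeq (σ (v.get i))))
        (t : Tm S F dom cod s) (ht : R v (varSeq t)),
        R w (varSeq (rename σ t)) := by
      intro σ hσ t ht
      have hflat : R w ((v.map fun x => varSeq (σ x)).flatten) := by
        have hcomp := hR.compose (c := w)
          (List.ofFn fun i : Fin v.length =>
            (ws.get (Fin.cast hlen.symm i), varSeq (σ (v.get i))))
          (by
            rw [List.map_ofFn]
            simp only [Function.comp_def]
            rw [ofFn_get_cast ws hlen.symm]
            exact hw)
          (by
            intro p hp
            simp only [List.mem_ofFn] at hp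
            obtain ⟨i, rfl⟩ := hp
            exact hσ i)
        rw [List.map_ofFn] at hcomp
        simp only [Function.comp_def] at hcomp
        rw [map_eq_ofFn v (fun x => varSeq (σ x))]
        exact hcomp
      have := hR.subst (fun x => varSeq (σ x)) ht hflat
      rwa [← varSeq_rename] at this
    exact ⟨step σ₁ h1 t₁ ih.1, step σ₂ h2 t₂ ih.2⟩

include he hR hMod

theorem exists_interp : ∀ {s : S} (t : Tm S F dom cod s) (v : List (S × ℕ)) (hv : v.Nodup)
    (hRv : R v (varSeq t)), ∃ g, Interp (toCat e R) M A mS mF v s t g := by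
  intro s t
  induction t with
  | var s k =>
    intro v hv hRv
    have hmem : (s, k) ∈ v := hR.mem hRv (s, k) (by simp [varSeq])
    obtain ⟨i, hi⟩ := List.mem_iff_get.mp hmem
    have hs' : s = (v.get i).1 := by rw [hi]
    subst hs'
    have hk' : k = (v.get i).2 := by rw [hi]
    subst hk'
    refine ⟨_, Interp.var v hv i ?_⟩
    refine (toCat_mem_iff e he hR hv (fun _ : Fin 1 => i)).mpr ?_
    rw [ofFn_one']
    exact hRv
  | app f args ih =>
    intro v hv hRv
    obtain ⟨cs, hcs1, hcs2⟩ := hMod v (List.ofFn fun i => varSeq (args i)) hRv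
    have hlen : cs.length = (dom f).length := by
      have := List.Forall₂.length_eq hcs2
      simpa using this
    set ws : Fin (dom f).length → List (S × ℕ) :=
      fun i => cs.get (Fin.cast hlen.symm i) with hwsdef
    have hRws : ∀ i, R (ws i) (varSeq (args i)) := by
      intro i
      have h2 := (List.forall₂_iff_get.mp hcs2).2 i.val (by omega)
        (by simp)
      simpa [List.get_ofFn, hwsdef] using h2
    have hws : ∀ i, (ws i).Nodup := fun i => hR.dom_nodup (hRws i)
    have hIs := fun i => (ih i (ws i) (hws i) (hRws i))
    choose hs hInt using hIs
    have hmemv : ∀ q : Fin (∑ i, (ws i).length),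
        (ws (finToSigma q).1).get (finToSigma q).2 ∈ v := by
      intro q
      apply hR.mem hcs1
      rw [List.mem_flatten]
      exact ⟨ws (finToSigma q).1, List.mem_iff_get.mpr ⟨_, rfl⟩,
        List.mem_iff_get.mpr ⟨_, rfl⟩⟩
    set θ : Fin (∑ i, (ws i).length) → Fin v.length :=
      fun q => posIn v _ (hmemv q) with hθdef
    have hpos : ∀ q, (ws (finToSigma q).1).get (finToSigma q).2 = v.get (θ q) :=
      fun q => (get_posIn v _ (hmemv q)).symm
    have hθmem : θ ∈ toCat e R (∑ i, (ws i).length) v.length := by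
      refine (toCat_mem_iff e he hR hv θ).mpr ?_
      have h3 : (List.ofFn fun q => v.get (θ q)) = (List.ofFn ws).flatten := by
        rw [flatten_ofFn_eq]
        congr 1
        funext q
        exact (hpos q).symm
      rw [h3, hwsdef]
      rw [ofFn_get_cast cs hlen.symm]
      exact hcs1
    exact ⟨_, Interp.app v hv f args ws hws hs hInt θ hθmem hpos⟩

end SecF


section SecG

variable {S F : Type} {dom : F → List S} {cod : F → S}
variable {M : Multicat} (mS : S → M.Obj)
variable (mF : ∀ f : F, M.Hom (dom f).length (fun i => mS ((dom f).get i)) (mS (cod f)))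
variable (σ : (x : S × ℕ) → Tm S F dom cod x.1)

theorem helper_len {x y : S × ℕ} (h : x = y) :
    (varSeq (σ x)).length = (varSeq (σ y)).length := by rw [h]

theorem helper_heq {x y : S × ℕ} (h : x = y) :
    HEq (canonHom (M := M) mS mF (σ x)) (canonHom mS mF (σ y)) := by subst h; rfl

theorem helper_obj {x y : S × ℕ} (h : x = y) (j : Fin (varSeq (σ x)).length) :
    mS ((varSeq (σ x)).get j).1
      = mS ((varSeq (σ y)).get (Fin.cast (helper_len σ h) j)).1 := by
  subst h; rfl

theorem helper_get {x y : S × ℕ} (h : x = y) (j : Fin (varSeq (σ x)).length) :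
    (varSeq (σ x)).get j = (varSeq (σ y)).get (Fin.cast (helper_len σ h) j) := by
  subst h; rfl

theorem canon_subst : ∀ {s : S} (t : Tm S F dom cod s),
    HEq (canonHom mS mF (rename σ t))
      (M.comp (canonHom mS mF t)
        (fun q => canonHom mS mF (σ ((varSeq t).get q)))) := by
  intro s t
  induction t with
  | var s k =>
    have hget : ∀ q : Fin (varSeq (Tm.var (S := S) (F := F) (dom := dom) (cod := cod)
        s k)).length, (varSeq (Tm.var s k)).get q = (s, k) := by
      intro q
      have h0 : q = ⟨0, Nat.zero_lt_one⟩ := Subsingleton.elim (α := Fin 1) q _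
      rw [h0]; rfl
    refine HEq.symm (HEq.trans ?_ (M.one_comp (canonHom mS mF (σ (s, k)))))
    refine comp_congr M rfl ?_ ?_ ?_ ?_ ?_
    · exact fun i => congrArg (fun x : S × ℕ => mS x.1) (hget i)
    · exact castHom_heq M _ _ _
    · exact fun i => helper_len σ (hget i)
    · exact fun i j => helper_obj mS σ (hget i) j
    · exact fun i => helper_heq mS mF σ (hget i)
  | app f args ih =>
    have hlen1 : (varSeq (Tm.app f args)).length = ∑ i, (varSeq (args i)).length :=
      length_flatten_ofFn _
    let fs : (i : Fin (dom f).length) → (j : Fin (varSeq (args i)).length) →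
        M.Hom (varSeq (σ ((varSeq (args i)).get j))).length
          (fun r => mS ((varSeq (σ ((varSeq (args i)).get j))).get r).1)
          (mS (((varSeq (args i)).get j).1)) :=
      fun i j => canonHom mS mF (σ ((varSeq (args i)).get j))
    have hA : HEq
        (M.comp (canonHom mS mF (Tm.app f args))
          (fun q => canonHom mS mF (σ ((varSeq (Tm.app f args)).get q))))
        (M.comp (M.comp (mF f) (fun i => canonHom mS mF (args i)))
          (fun p => fs (finToSigma p).1 (finToSigma p).2)) := by
      refine comp_congr M hlen1 ?_ ?_ ?_ ?_ ?_
      · exact fun i => congrArg (fun x : S × ℕ => mS x.1)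
          (get_flatten_ofFn (fun i => varSeq (args i)) (Fin.cast hlen1 i) i.isLt)
      · exact castHom_heq M _ _ _
      · exact fun i => helper_len σ
          (get_flatten_ofFn (fun i => varSeq (args i)) (Fin.cast hlen1 i) i.isLt)
      · exact fun i j => helper_obj mS σ
          (get_flatten_ofFn (fun i => varSeq (args i)) (Fin.cast hlen1 i) i.isLt) j
      · exact fun i => helper_heq mS mF σ
          (get_flatten_ofFn (fun i => varSeq (args i)) (Fin.cast hlen1 i) i.isLt)
    have hB := M.assoc (mF f) (fun i => canonHom mS mF (args i)) fs
    have hC : HEq (M.comp (mF f) (fun i => M.comp (canonHom mS mF (args i)) (fs i)))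
        (M.comp (mF f) (fun i => canonHom mS mF (rename σ (args i)))) := by
      refine comp_congr M rfl (fun _ => rfl) HEq.rfl ?_ ?_ ?_
      · exact fun i => (rename_len σ (args i)).symm
      · intro i j
        exact (congrArg (fun x : S × ℕ => mS x.1) (rename_get σ (args i) j (by
          rw [rename_len σ (args i)]; exact j.isLt))).symm
      · exact fun i => (ih i).symm
    have hD : HEq (M.comp (mF f) (fun i => canonHom mS mF (rename σ (args i))))
        (canonHom mS mF (rename σ (Tm.app f args))) := (castHom_heq M _ _ _).symm
    exact (((hA.trans hB).trans hC).trans hD).symm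

end SecG


section SecH

variable {S F : Type} {dom : F → List S} {cod : F → S}
variable (e : ℕ → S × ℕ) (he : Function.Injective e)
variable {R : List (S × ℕ) → List (S × ℕ) → Prop} (hR : IsCtxStruct R)
variable {M : Multicat} (A : DeltaAction (toCat e R) M) (mS : S → M.Obj)
variable (mF : ∀ f : F, M.Hom (dom f).length (fun i => mS ((dom f).get i)) (mS (cod f)))

include he hR

theorem subst_interp {s : S} {v w : List (S × ℕ)} {t : Tm S F dom cod s}
    (σ : (x : S × ℕ) → Tm S F dom cod x.1)
    (W : Fin v.length → List (S × ℕ))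
    {G : M.Hom v.length (fun i => mS ((v.get i).1)) (mS s)}
    (hG : Interp (toCat e R) M A mS mF v s t G)
    {H : (q : Fin v.length) → M.Hom (W q).length
      (fun j => mS (((W q).get j).1)) (mS ((v.get q).1))}
    (hH : ∀ q, Interp (toCat e R) M A mS mF (W q) (v.get q).1 (σ (v.get q)) (H q))
    {g' : M.Hom w.length (fun i => mS ((w.get i).1)) (mS s)}
    (hg' : Interp (toCat e R) M A mS mF w s (rename σ t) g')
    (Θ : Fin (∑ q, (W q).length) → Fin w.length)
    (hΘ : Θ ∈ toCat e R (∑ q, (W q).length) w.length)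
    (hposΘ : ∀ p, (W (finToSigma p).1).get (finToSigma p).2 = w.get (Θ p)) :
    g' = A.act Θ hΘ (fun p => congrArg (fun x : S × ℕ => mS x.1) (hposΘ p))
      (M.comp G H) := by
  classical
  have hw' : w.Nodup := interp_nodup e A mS mF hg'
  obtain ⟨hRr, α, hα, hposα, heqα⟩ := canonical_form e he hR A mS mF hg'
  obtain ⟨hRt, β, hβ, hposβ, heqβ⟩ := canonical_form e he hR A mS mF hG
  choose γ hγ hposγ hHeq using fun q => (canonical_form e he hR A mS mF (hH q)).2
  -- abbreviations
  let l : Fin v.length → ℕ := fun q => (W q).length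
  let kσ : Fin (varSeq t).length → ℕ := fun p => (varSeq (σ (v.get (β p)))).length
  let kτ : Fin (varSeq t).length → ℕ := fun p => (varSeq (σ ((varSeq t).get p))).length
  have hkk : kτ = kσ := funext fun p =>
    congrArg (fun x : S × ℕ => (varSeq (σ x)).length) (hposβ p)
  have hm : (varSeq (rename σ t)).length = ∑ p, kσ p :=
    (rename_len σ t).trans (by rw [← hkk])
  have hmk : (∑ p, kσ p) = ∑ p, kτ p := by rw [hkk]
  -- transported canonical homs
  let canβ : M.Hom (varSeq t).length (fun p => mS ((v.get (β p)).1)) (mS s) :=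
    castHom M rfl (fun p => congrArg (fun x : S × ℕ => mS x.1) (hposβ p))
      (canonHom mS mF t)
  let cγ : (p : Fin (varSeq t).length) → M.Hom (kσ p)
      (fun j => mS (((W (β p)).get (γ (β p) j)).1)) (mS ((v.get (β p)).1)) :=
    fun p => castHom M rfl
      (fun j => congrArg (fun x : S × ℕ => mS x.1) (hposγ (β p) j))
      (canonHom mS mF (σ (v.get (β p))))
  -- memberships
  have hsim : simComp β l ∈ toCat e R (∑ p, l (β p)) (∑ q, l q) :=
    toCat_simComp e he hR hβ l
  have hcop2 : coprodFam (fun p => γ (β p)) ∈ toCat e R (∑ p, kσ p) (∑ p, l (β p)) :=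
    toCat_coprodFam e he hR _ (fun p => hγ (β p))
  have hc1 : (fun x => simComp β l (coprodFam (fun p => γ (β p)) x)) ∈
      toCat e R (∑ p, kσ p) (∑ q, l q) := toCat_comp e he hR hcop2 hsim
  have hbig : (fun x => Θ (simComp β l (coprodFam (fun p => γ (β p)) x))) ∈
      toCat e R (∑ p, kσ p) w.length := toCat_comp e he hR hc1 hΘ
  -- entry computations
  have hA1 : ∀ x : Fin (∑ p, kσ p),
      finToSigma (coprodFam (fun p => γ (β p)) x)
        = ⟨(finToSigma x).1, γ (β (finToSigma x).1) (finToSigma x).2⟩ :=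
    fun x => finToSigma_sigmaToFin _
  have hA2 : ∀ y : Fin (∑ p, l (β p)),
      finToSigma (simComp β l y) = ⟨β (finToSigma y).1, (finToSigma y).2⟩ :=
    fun y => finToSigma_sigmaToFin _
  have eW : ∀ x : Fin (∑ p, kσ p),
      (W (β (finToSigma x).1)).get (γ (β (finToSigma x).1) (finToSigma x).2)
        = (W (finToSigma (simComp β l (coprodFam (fun p => γ (β p)) x))).1).get
            (finToSigma (simComp β l (coprodFam (fun p => γ (β p)) x))).2 := by
    intro x
    have h1 := congrArg (fun z : (q : Fin v.length) × Fin (l q) => (W z.1).get z.2)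
      (hA2 (coprodFam (fun p => γ (β p)) x))
    have h2 := congrArg
      (fun z : (p : Fin (varSeq t).length) × Fin (l (β p)) => (W (β z.1)).get z.2)
      (hA1 x)
    exact (h2.symm.trans h1.symm)
  -- G and H in canonical form
  have heqG : G = A.act β hβ (fun _ => rfl) canβ := by
    rw [heqβ]
    exact act_congr A rfl (fun _ => rfl)
      (fun p => congrArg (fun x : S × ℕ => mS x.1) (hposβ p))
      ((castHom_heq M rfl _ _).symm)
  have heqH : (fun p => H (β p))
      = fun p => A.act (γ (β p)) (hγ (β p)) (fun _ => rfl) (cγ p) := by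
    funext p
    rw [hHeq (β p)]
    exact act_congr A rfl (fun _ => rfl)
      (fun j => congrArg (fun x : S × ℕ => mS x.1) (hposγ (β p) j))
      ((castHom_heq M rfl _ _).symm)
  -- fully transported hom
  let fC : M.Hom (∑ p, kσ p)
      (fun x => mS ((w.get (Θ (simComp β l (coprodFam (fun p => γ (β p)) x)))).1))
      (mS s) :=
    castHom M rfl
      (fun x => congrArg (fun x : S × ℕ => mS x.1)
        ((eW x).trans (hposΘ _)))
      (M.comp canβ cγ)
  -- act_sim and act_arg steps
  have step_sim := A.act_sim β hβ canβ (k := l)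
    (a := fun q => fun j => mS (((W q).get j).1)) H hsim
    (fun q' => congrArg
      (fun z : (q : Fin v.length) × Fin (l q) => mS (((W z.1).get z.2).1))
      (hA2 q').symm)
  have step_arg := A.act_arg canβ (fun p => γ (β p)) (fun p => hγ (β p))
    (a := fun p j => mS (((W (β p)).get j).1)) cγ hcop2
    (fun x => congrArg
      (fun z : (p : Fin (varSeq t).length) × Fin (l (β p)) => mS (((W (β z.1)).get z.2).1))
      (hA1 x).symm)
  have c1 := A.act_comp (coprodFam (fun p => γ (β p))) (simComp β l) hcop2 hsim hc1
    (as := fun p' => mS ((w.get (Θ p')).1)) fC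
  have c2 := A.act_comp (simComp β l ∘ coprodFam fun p => γ (β p)) Θ hc1 hΘ
    hbig (as := fun j => mS ((w.get j).1)) fC
  -- key pointwise computation
  have hkey : ∀ x : Fin (∑ p, kσ p),
      (varSeq (rename σ t)).get (Fin.cast hm.symm x)
        = w.get (Θ (simComp β l (coprodFam (fun p => γ (β p)) x))) := by
    intro x
    have hfts := fts_congr hkk (Fin.cast hmk x)
    have hfst : (finToSigma (k := kσ) x).1 = (finToSigma (k := kτ) (Fin.cast hmk x)).1 :=
      congrArg Sigma.fst hfts
    have hval : ((finToSigma (k := kσ) x).2 : ℕ)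
        = ((finToSigma (k := kτ) (Fin.cast hmk x)).2 : ℕ) :=
      congrArg (fun z : (p : Fin (varSeq t).length) × Fin (kσ p) => (z.2 : ℕ)) hfts
    have e1 : (varSeq (rename σ t)).get (Fin.cast hm.symm x)
        = (varSeq (σ ((varSeq t).get (finToSigma (Fin.cast hmk x)).1))).get
            (finToSigma (Fin.cast hmk x)).2 :=
      rename_get σ t (Fin.cast hmk x) ((Fin.cast hm.symm x).isLt)
    have hx1 : (varSeq t).get (finToSigma (Fin.cast hmk x)).1
        = v.get (β (finToSigma (k := kσ) x).1) :=
      (hposβ _).trans (congrArg (fun z => v.get (β z)) hfst.symm)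
    have e2 : (varSeq (σ ((varSeq t).get (finToSigma (Fin.cast hmk x)).1))).get
          (finToSigma (Fin.cast hmk x)).2
        = (varSeq (σ (v.get (β (finToSigma (k := kσ) x).1)))).get
            (finToSigma (k := kσ) x).2 := by
      refine (helper_get σ hx1 (finToSigma (Fin.cast hmk x)).2).trans ?_
      congr 1
      exact Fin.ext hval.symm
    have e3 := hposγ (β (finToSigma (k := kσ) x).1) (finToSigma (k := kσ) x).2
    exact ((e1.trans e2).trans e3).trans ((eW x).trans (hposΘ _))
  -- assemble
  rw [heqα]
  symm
  calc A.act Θ hΘ (fun p => congrArg (fun x : S × ℕ => mS x.1) (hposΘ p)) (M.comp G H)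
      = A.act Θ hΘ (fun _ => rfl)
          (A.act (simComp β l) hsim (as := fun p' => mS ((w.get (Θ p')).1)) (fun _ => rfl)
            (A.act (coprodFam (fun p => γ (β p))) hcop2
              (as := fun p'' => mS ((w.get (Θ (simComp β l p''))).1)) (fun _ => rfl)
              fC)) := by
        rw [heqG, step_sim, heqH, step_arg]
        refine act_congr A rfl (fun _ => rfl) ?_ ?_
        · exact fun p' => congrArg (fun x : S × ℕ => mS x.1) (hposΘ p')
        · refine act_hcongr A rfl (fun _ => rfl) ?_ ?_ ?_
          · exact fun p'' => congrArg (fun x : S × ℕ => mS x.1)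
              ((congrArg (fun z : (q : Fin v.length) × Fin (l q) => (W z.1).get z.2)
                (hA2 p'')).symm.trans (hposΘ (simComp β l p'')))
          · exact fun p' => congrArg (fun x : S × ℕ => mS x.1) (hposΘ p')
          · refine act_hcongr A rfl (fun _ => rfl) ?_ ?_ ?_
            · exact fun x => congrArg (fun x : S × ℕ => mS x.1)
                ((eW x).trans (hposΘ _))
            · exact fun p'' => congrArg (fun x : S × ℕ => mS x.1)
                ((congrArg (fun z : (q : Fin v.length) × Fin (l q) => (W z.1).get z.2)
                  (hA2 p'')).symm.trans (hposΘ (simComp β l p'')))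
            · exact (castHom_heq M rfl _ _).symm
      _ = A.act Θ hΘ (fun _ => rfl)
          (A.act (simComp β l ∘ coprodFam fun p => γ (β p)) hc1 (fun _ => rfl) fC) :=
        congrArg (fun X => A.act Θ hΘ (fun _ => rfl) X) c1.symm
      _ = A.act (Θ ∘ (simComp β l ∘ coprodFam fun p => γ (β p))) hbig
          (fun _ => rfl) fC := c2.symm
      _ = A.act α hα (fun q => congrArg (fun x : S × ℕ => mS x.1) (hposα q))
          (canonHom mS mF (rename σ t)) := by
        refine act_congr A hm.symm ?_ ?_ ?_
        · exact fun x => (hw'.get_inj_iff.mp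
            ((hposα (Fin.cast hm.symm x)).symm.trans (hkey x))).symm
        · exact fun x => (congrArg (fun x : S × ℕ => mS x.1) (hkey x)).symm
        · -- HEq fC (canonHom mS mF (rename σ t))
          refine HEq.trans (castHom_heq M rfl _ _) (HEq.trans ?_ (canon_subst mS mF σ t).symm)
          refine comp_congr M rfl ?_ ?_ ?_ ?_ ?_
          · exact fun p => congrArg (fun x : S × ℕ => mS x.1) (hposβ p).symm
          · exact castHom_heq M rfl _ _
          · exact fun p => helper_len σ (hposβ p).symm
          · exact fun p j => congrArg (fun x : S × ℕ => mS x.1)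
              ((hposγ (β p) j).symm.trans (helper_get σ (hposβ p).symm j))
          · exact fun p => (castHom_heq M rfl _ _).trans
              (helper_heq mS mF σ (hposβ p).symm)

end SecH

/-- Soundness of `R`-deduction: if `E ⊢_R φ` then every model of `E` in any
`Δ_R`-multicategory satisfies `φ`. -/
theorem stmt_17 {S F : Type} (dom : F → List S) (cod : F → S)
    (R : List (S × ℕ) → List (S × ℕ) → Prop) (hR : IsCtxStruct R) (hMod : Modelable R)
    (e : ℕ → S × ℕ) (he : Function.Injective e)
    (E : ∀ s : S, List (S × ℕ) → Tm S F dom cod s → Tm S F dom cod s → Prop)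
    (hE : ∀ s v t₁ t₂, E s v t₁ t₂ → R v (varSeq t₁) ∧ R v (varSeq t₂))
    {s₀ : S} {v₀ : List (S × ℕ)} {t₁ t₂ : Tm S F dom cod s₀}
    (hded : Ded R E s₀ v₀ t₁ t₂)
    (M : Multicat) (A : DeltaAction (toCat e R) M)
    (mS : S → M.Obj)
    (mF : ∀ f : F, M.Hom (dom f).length (fun i => mS ((dom f).get i)) (mS (cod f)))
    (hsat : ∀ (s : S) (v : List (S × ℕ)) (u₁ u₂ : Tm S F dom cod s), E s v u₁ u₂ →
      ∀ g₁ g₂, Interp (toCat e R) M A mS mF v s u₁ g₁ →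
        Interp (toCat e R) M A mS mF v s u₂ g₂ → g₁ = g₂) :
    ∀ g₁ g₂, Interp (toCat e R) M A mS mF v₀ s₀ t₁ g₁ →
      Interp (toCat e R) M A mS mF v₀ s₀ t₂ g₂ → g₁ = g₂ := by
  induction hded with
  | ax h => exact fun g₁ g₂ h₁ h₂ => hsat _ _ _ _ h g₁ g₂ h₁ h₂
  | refl t h => exact fun g₁ g₂ h₁ h₂ => interp_unique e he hR A mS mF h₁ h₂
  | symm h ih => exact fun g₁ g₂ h₁ h₂ => (ih g₂ g₁ h₂ h₁).symm
  | @trans s v t₁ t₂ t₃ h1 h2 ih1 ih2 =>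
    intro g₁ g₂ hg₁ hg₂
    have hRmid : R v (varSeq t₂) := (ded_R hR hE h1).2
    have hv : v.Nodup := hR.dom_nodup hRmid
    obtain ⟨gm, hgm⟩ := exists_interp e he hR hMod A mS mF t₂ v hv hRmid
    exact (ih1 g₁ gm hg₁ hgm).trans (ih2 gm g₂ hgm hg₂)
  | @subst s v t₁ t₂ σ₁ σ₂ w ws hlen hd h1 h2 hall hw ih ihall =>
    intro g₁ g₂ hg₁ hg₂
    have hv : v.Nodup := hR.dom_nodup (ded_R hR hE hd).1
    have hw' : w.Nodup := hR.dom_nodup hw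
    have hWnodup : ∀ q : Fin v.length, (ws.get (Fin.cast hlen.symm q)).Nodup :=
      fun q => hR.dom_nodup (h1 q)
    obtain ⟨G₁, hG₁⟩ := exists_interp e he hR hMod A mS mF t₁ v hv (ded_R hR hE hd).1
    obtain ⟨G₂, hG₂⟩ := exists_interp e he hR hMod A mS mF t₂ v hv (ded_R hR hE hd).2
    have hGeq : G₁ = G₂ := ih G₁ G₂ hG₁ hG₂
    choose H₁ hH₁ using fun q : Fin v.length =>
      exists_interp e he hR hMod A mS mF (σ₁ (v.get q)) (ws.get (Fin.cast hlen.symm q))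
        (hWnodup q) (h1 q)
    choose H₂ hH₂ using fun q : Fin v.length =>
      exists_interp e he hR hMod A mS mF (σ₂ (v.get q)) (ws.get (Fin.cast hlen.symm q))
        (hWnodup q) (h2 q)
    have hHeq : H₁ = H₂ := funext fun q => ihall q (H₁ q) (H₂ q) (hH₁ q) (hH₂ q)
    have hwW : R w (List.ofFn fun q : Fin v.length =>
        ws.get (Fin.cast hlen.symm q)).flatten := by
      rw [ofFn_get_cast ws hlen.symm]
      exact hw
    have hmem : ∀ p : Fin (∑ q : Fin v.length, (ws.get (Fin.cast hlen.symm q)).length),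
        (ws.get (Fin.cast hlen.symm (finToSigma p).1)).get (finToSigma p).2 ∈ w := by
      intro p
      apply hR.mem hwW
      rw [List.mem_flatten]
      exact ⟨ws.get (Fin.cast hlen.symm (finToSigma p).1),
        List.mem_ofFn.mpr ⟨_, rfl⟩, List.mem_iff_get.mpr ⟨_, rfl⟩⟩
    have hposΘ : ∀ p, (ws.get (Fin.cast hlen.symm (finToSigma p).1)).get (finToSigma p).2
        = w.get (posIn w _ (hmem p)) :=
      fun p => (get_posIn w _ (hmem p)).symm
    have hΘ : (fun p => posIn w _ (hmem p)) ∈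
        toCat e R (∑ q : Fin v.length, (ws.get (Fin.cast hlen.symm q)).length) w.length := by
      refine (toCat_mem_iff e he hR hw' _).mpr ?_
      have h3 : (List.ofFn fun p => w.get (posIn w _ (hmem p)))
          = (List.ofFn fun q : Fin v.length => ws.get (Fin.cast hlen.symm q)).flatten := by
        rw [flatten_ofFn_eq]
        congr 1
        funext p
        exact (hposΘ p).symm
      rw [h3]
      exact hwW
    rw [subst_interp e he hR A mS mF σ₁ _ hG₁ hH₁ hg₁ _ hΘ hposΘ,
      subst_interp e he hR A mS mF σ₂ _ hG₂ hH₂ hg₂ _ hΘ hposΘ, hGeq, hHeq]
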